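/- There exist δ > 0 with δ < b − d(0) and a constant L > 0 such that for every u ∈ [−u_x, u_x] and every λ ∈ (−δ, δ), the function λ ↦ 𝒫_u(x,b,λ) is twice differentiable at λ and its second derivative satisfies |∂²_λ 𝒫_u(x,b,λ)| ≤ L, where L is independent of λ and of u. -/

import Mathlib

open MeasureTheory Real Set

/-- Second derivative of `ξ`. -/
noncomputable def xi2 (ξ : ℝ → ℝ) : ℝ → ℝ := deriv (deriv ξ)

/-- `d(q) = ∫_q^1 ξ''(s) x(s) ds`. -/
noncomputable def dFun (ξ x : ℝ → ℝ) (q : ℝ) : ℝ := ∫ s in q..1, xi2 ξ s * x s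

/-- `φ_u(q) = d(u) + ((1-t)/(1+t))(d(q) - d(u))`. -/
noncomputable def phiFun (ξ x : ℝ → ℝ) (t u q : ℝ) : ℝ :=
  dFun ξ x u + (1 - t) / (1 + t) * (dFun ξ x q - dFun ξ x u)

/-- The functional `T_u(x,b,λ)` of Proposition 2.1. -/
noncomputable def TFun (ξ x : ℝ → ℝ) (t b u lam : ℝ) : ℝ :=
  let η : ℝ := if 0 ≤ u then 1 else -1
  (1 / 2) * Real.log (b ^ 2 / (b ^ 2 - lam ^ 2))
    + (1 + t) / 2 * (∫ s in (0:ℝ)..|u|, xi2 ξ s / (b - η * lam - dFun ξ x s))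
    + (1 - t) / 2 * (∫ s in (0:ℝ)..|u|, xi2 ξ s / (b + η * lam - phiFun ξ x t |u| s))
    + (1 / 2) * (∫ s in |u|..(1:ℝ), xi2 ξ s / (b - lam - dFun ξ x s))
    + (1 / 2) * (∫ s in |u|..(1:ℝ), xi2 ξ s / (b + lam - dFun ξ x s))
    - lam * u + b - 1 - Real.log b - ∫ q in (0:ℝ)..1, xi2 ξ q * x q

/-- The two-dimensional Guerra functional `𝒫_u(x,b,λ)`. -/
noncomputable def GuerraP (ξ x : ℝ → ℝ) (t h b u lam : ℝ) : ℝ :=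
  if 0 ≤ u then TFun ξ x t b u lam + h ^ 2 / (b - lam - dFun ξ x 0)
  else TFun ξ x t b u lam + h ^ 2 / (b - lam - phiFun ξ x t |u| 0)

/-- The Crisanti–Sommers functional `𝒫(x,b)`. -/
noncomputable def CSFun (ξ x : ℝ → ℝ) (h b : ℝ) : ℝ :=
  (1 / 2) * (h ^ 2 / (b - dFun ξ x 0)
    + (∫ q in (0:ℝ)..1, xi2 ξ q / (b - dFun ξ x q))
    + b - 1 - Real.log b - ∫ q in (0:ℝ)..1, xi2 ξ q * x q)

/-! For `|u| ≤ 1` every summand of `𝒫_u(x,b,·)` is, up to a constant factor, an integral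
`∫ g(s) / (D(s) - η λ) ds`, a quotient `c / (a - η λ)`, the logarithm `log (b² / (b² - λ²))`
or an affine function of `λ`, with `|η| ≤ 1`. Since `ξ'' x ≥ 0`, `d` is bounded by `d(0)`, and so
is `φ_{|u|}`, a convex combination of values of `d`; hence all of `D`, `a` are at least
`b - d(0) = 2δ`, and for `|λ| < δ` every denominator stays above `δ`. Differentiating twice
(under the integral sign) then bounds `|∂²_λ 𝒫_u|` by `1/δ² + 2 ∫₀¹ |ξ''| / δ³ + 2 h² / δ³`,
which depends neither on `u` nor on `λ`. -/

open Filter Topology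

/-- Witnessed by explicit `f'`, `f''` rather than `deriv`, so that sums and restrictions need no
differentiability side conditions; on open `s` they are the iterated derivatives. -/
def HasSecondDerivBoundOn (f : ℝ → ℝ) (s : Set ℝ) (L : ℝ) : Prop :=
  ∃ f' f'' : ℝ → ℝ, ∀ l ∈ s, HasDerivAt f (f' l) l ∧ HasDerivAt f' (f'' l) l ∧ |f'' l| ≤ L

namespace HasSecondDerivBoundOn

variable {f g : ℝ → ℝ} {s : Set ℝ} {L M : ℝ}

theorem mono (hf : HasSecondDerivBoundOn f s L) (hLM : L ≤ M) :
    HasSecondDerivBoundOn f s M := by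
  obtain ⟨f', f'', hf⟩ := hf
  exact ⟨f', f'', fun l hl => (hf l hl).imp_right (And.imp_right (·.trans hLM))⟩

theorem add (hf : HasSecondDerivBoundOn f s L) (hg : HasSecondDerivBoundOn g s M) :
    HasSecondDerivBoundOn (fun l => f l + g l) s (L + M) := by
  obtain ⟨f', f'', hf⟩ := hf
  obtain ⟨g', g'', hg⟩ := hg
  refine ⟨fun l => f' l + g' l, fun l => f'' l + g'' l, fun l hl => ?_⟩
  obtain ⟨hf₁, hf₂, hf₃⟩ := hf l hl
  obtain ⟨hg₁, hg₂, hg₃⟩ := hg l hl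
  exact ⟨hf₁.add hg₁, hf₂.add hg₂, (abs_add_le _ _).trans (add_le_add hf₃ hg₃)⟩

theorem const_mul (c : ℝ) (hf : HasSecondDerivBoundOn f s L) :
    HasSecondDerivBoundOn (fun l => c * f l) s (|c| * L) := by
  obtain ⟨f', f'', hf⟩ := hf
  refine ⟨fun l => c * f' l, fun l => c * f'' l, fun l hl => ?_⟩
  obtain ⟨hf₁, hf₂, hf₃⟩ := hf l hl
  exact ⟨hf₁.const_mul c, hf₂.const_mul c, by rw [abs_mul]; gcongr⟩

theorem affine (α β : ℝ) : HasSecondDerivBoundOn (fun l => α * l + β) s 0 :=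
  ⟨fun _ => α, fun _ => 0, fun l _ =>
    ⟨by simpa using ((hasDerivAt_id l).const_mul α).add_const β, hasDerivAt_const l α,
      by simp⟩⟩

theorem congr (hs : IsOpen s) (hf : HasSecondDerivBoundOn f s L) (hfg : EqOn f g s) :
    HasSecondDerivBoundOn g s L := by
  obtain ⟨f', f'', hf⟩ := hf
  refine ⟨f', f'', fun l hl => ?_⟩
  obtain ⟨hf₁, hf₂, hf₃⟩ := hf l hl
  exact ⟨hf₁.congr_of_eventuallyEq (eventuallyEq_of_mem (hs.mem_nhds hl) hfg.symm), hf₂, hf₃⟩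

theorem differentiableAt_deriv_and_abs_deriv_deriv_le (hs : IsOpen s)
    (hf : HasSecondDerivBoundOn f s L) {l : ℝ} (hl : l ∈ s) :
    DifferentiableAt ℝ f l ∧ DifferentiableAt ℝ (deriv f) l ∧ |deriv (deriv f) l| ≤ L := by
  obtain ⟨f', f'', hf⟩ := hf
  have hderiv : deriv f =ᶠ[𝓝 l] f' :=
    eventually_of_mem (hs.mem_nhds hl) fun y hy => (hf y hy).1.deriv
  obtain ⟨hf₁, hf₂, hf₃⟩ := hf l hl
  have hf₂' := hf₂.congr_of_eventuallyEq hderiv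
  exact ⟨hf₁.differentiableAt, hf₂'.differentiableAt, hf₂'.deriv ▸ hf₃⟩

end HasSecondDerivBoundOn

theorem lt_sub_mul_of_mem_Ioo {a η δ l : ℝ} (hη : |η| ≤ 1) (ha : 2 * δ ≤ a)
    (hl : l ∈ Ioo (-δ) δ) : δ < a - η * l := by
  have : η * l < δ :=
    calc η * l ≤ |η| * |l| := (le_abs_self _).trans (abs_mul η l).le
      _ ≤ 1 * |l| := by gcongr
      _ < δ := by rw [one_mul]; exact abs_lt.2 hl
  linarith

theorem abs_div_pow_le_of_le {c y δ : ℝ} (k : ℕ) (hδ : 0 < δ) (hy : δ ≤ y) :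
    |c / y ^ k| ≤ |c| / δ ^ k := by
  rw [abs_div, abs_pow, abs_of_pos (hδ.trans_le hy)]
  gcongr

theorem hasDerivAt_div_sub_mul_pow (c a η l : ℝ) (k : ℕ) (h : a - η * l ≠ 0) :
    HasDerivAt (fun l => c / (a - η * l) ^ k) (k * η * c / (a - η * l) ^ (k + 1)) l := by
  have hlin : HasDerivAt (fun l => a - η * l) (-η) l := by
    simpa using ((hasDerivAt_id l).const_mul η).const_sub a
  refine ((hasDerivAt_const l c).fun_div (hlin.fun_pow k) (pow_ne_zero k h)).congr_deriv ?_
  rcases k with _ | k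
  · simp
  · rw [Nat.add_sub_cancel]
    field_simp
    push_cast
    ring

namespace HasSecondDerivBoundOn

variable {a η δ : ℝ}

theorem div_sub_mul (c : ℝ) (hη : |η| ≤ 1) (hδ : 0 < δ) (ha : 2 * δ ≤ a) :
    HasSecondDerivBoundOn (fun l => c / (a - η * l)) (Ioo (-δ) δ) (2 * |c| / δ ^ 3) := by
  refine ⟨fun l => η * c / (a - η * l) ^ 2, fun l => 2 * η * (η * c) / (a - η * l) ^ 3,
    fun l hl => ?_⟩
  have hpos := lt_sub_mul_of_mem_Ioo hη ha hl
  refine ⟨by simpa using hasDerivAt_div_sub_mul_pow c a η l 1 (hδ.trans hpos).ne',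
    by simpa using hasDerivAt_div_sub_mul_pow (η * c) a η l 2 (hδ.trans hpos).ne', ?_⟩
  calc _ ≤ |2 * η * (η * c)| / δ ^ 3 := abs_div_pow_le_of_le 3 hδ hpos.le
    _ = 2 * |η| ^ 2 * |c| / δ ^ 3 := by simp only [abs_mul, abs_two]; ring
    _ ≤ 2 * 1 * |c| / δ ^ 3 := by gcongr; exact pow_le_one₀ (abs_nonneg η) hη
    _ = 2 * |c| / δ ^ 3 := by ring

theorem neg_log_sub (hη : |η| ≤ 1) (hδ : 0 < δ) (ha : 2 * δ ≤ a) :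
    HasSecondDerivBoundOn (fun l => -log (a - η * l)) (Ioo (-δ) δ) (1 / δ ^ 2) := by
  refine ⟨fun l => η / (a - η * l), fun l => η * η / (a - η * l) ^ 2, fun l hl => ?_⟩
  have hpos := lt_sub_mul_of_mem_Ioo hη ha hl
  have hlin : HasDerivAt (fun l => a - η * l) (-η) l := by
    simpa using ((hasDerivAt_id l).const_mul η).const_sub a
  refine ⟨(hlin.log (hδ.trans hpos).ne').neg.congr_deriv (by ring),
    by simpa using hasDerivAt_div_sub_mul_pow η a η l 1 (hδ.trans hpos).ne', ?_⟩
  calc _ ≤ |η * η| / δ ^ 2 := abs_div_pow_le_of_le 2 hδ hpos.le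
    _ = |η| ^ 2 / δ ^ 2 := by rw [abs_mul, sq |η|]
    _ ≤ 1 / δ ^ 2 := by gcongr; exact pow_le_one₀ (abs_nonneg η) hη

theorem log_sq_div_sq_sub_sq {b : ℝ} (hδ : 0 < δ) (hb : 2 * δ ≤ b) :
    HasSecondDerivBoundOn (fun l => log (b ^ 2 / (b ^ 2 - l ^ 2))) (Ioo (-δ) δ)
      (2 / δ ^ 2) := by
  have hsplit := ((neg_log_sub (η := 1) (by simp) hδ hb).add
    (neg_log_sub (η := -1) (by simp) hδ hb)).add (affine (s := Ioo (-δ) δ) 0 (2 * log b))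
  refine (hsplit.congr isOpen_Ioo fun l hl => ?_).mono (le_of_eq (by ring))
  have hminus := lt_sub_mul_of_mem_Ioo (η := 1) (by simp) hb hl
  have hplus := lt_sub_mul_of_mem_Ioo (η := -1) (by simp) hb hl
  have hfactor : b ^ 2 - l ^ 2 = (b - 1 * l) * (b - -1 * l) := by ring
  have hm : 0 < b - 1 * l := hδ.trans hminus
  have hp : 0 < b - -1 * l := hδ.trans hplus
  rw [hfactor, log_div (by nlinarith) (mul_pos hm hp).ne', log_mul hm.ne' hp.ne', log_pow]
  push_cast
  ring

end HasSecondDerivBoundOn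

section ParametricIntegral

variable {g D : ℝ → ℝ} {p q η δ l : ℝ}

theorem continuousOn_div_sub_mul_pow (hg : ContinuousOn g (Icc p q))
    (hD : ContinuousOn D (Icc p q)) (hDl : ∀ s ∈ Icc p q, D s - η * l ≠ 0) (k : ℕ) :
    ContinuousOn (fun s => g s / (D s - η * l) ^ k) (Icc p q) :=
  hg.div ((hD.sub continuousOn_const).pow k) fun s hs => pow_ne_zero k (hDl s hs)

theorem hasDerivAt_integral_div_sub_mul_pow (hpq : p ≤ q) (hg : ContinuousOn g (Icc p q))
    (hD : ContinuousOn D (Icc p q)) (hDδ : ∀ s ∈ Icc p q, 2 * δ ≤ D s) (hη : |η| ≤ 1) (k : ℕ)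
    (hl : l ∈ Ioo (-δ) δ) :
    HasDerivAt (fun l => ∫ s in p..q, g s / (D s - η * l) ^ k)
      (k * η * ∫ s in p..q, g s / (D s - η * l) ^ (k + 1)) l := by
  have hδ : 0 < δ := by linarith [hl.1, hl.2]
  have hpos : ∀ l' ∈ Ioo (-δ) δ, ∀ s ∈ Icc p q, δ < D s - η * l' :=
    fun l' hl' s hs => lt_sub_mul_of_mem_Ioo hη (hDδ s hs) hl'
  have hcont : ∀ l' ∈ Ioo (-δ) δ, ∀ k : ℕ,
      ContinuousOn (fun s => g s / (D s - η * l') ^ k) (Icc p q) := fun l' hl' k =>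
    continuousOn_div_sub_mul_pow hg hD (fun s hs => (hδ.trans (hpos l' hl' s hs)).ne') k
  have hmeas : ∀ l' ∈ Ioo (-δ) δ, ∀ k : ℕ, AEStronglyMeasurable
      (fun s => g s / (D s - η * l') ^ k) (volume.restrict (uIoc p q)) := fun l' hl' k =>
    ((hcont l' hl' k).aestronglyMeasurable measurableSet_Icc).mono_measure
      (Measure.restrict_mono (by rw [uIoc_of_le hpq]; exact Ioc_subset_Icc_self) le_rfl)
  have hIcc : ∀ s ∈ uIoc p q, s ∈ Icc p q := fun s hs =>
    Ioc_subset_Icc_self (by rwa [uIoc_of_le hpq] at hs)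
  have key := intervalIntegral.hasDerivAt_integral_of_dominated_loc_of_deriv_le (μ := volume)
    (F := fun l s => g s / (D s - η * l) ^ k)
    (F' := fun l s => k * η * (g s / (D s - η * l) ^ (k + 1)))
    (bound := fun s => k * (|g s| / δ ^ (k + 1)))
    (isOpen_Ioo.mem_nhds hl)
    (eventually_of_mem (isOpen_Ioo.mem_nhds hl) fun l' hl' => hmeas l' hl' k)
    ((hcont l hl k).intervalIntegrable_of_Icc hpq)
    ((hmeas l hl (k + 1)).const_mul _)
    (ae_of_all _ fun s hs l' hl' => ?bound)
    (((hg.abs.div_const _).const_smul (k : ℝ)).intervalIntegrable_of_Icc hpq)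
    (ae_of_all _ fun s hs l' hl' => ?deriv)
  case bound =>
    rw [Real.norm_eq_abs, abs_mul, abs_mul, Nat.abs_cast]
    calc (k : ℝ) * |η| * |g s / (D s - η * l') ^ (k + 1)|
        ≤ k * 1 * (|g s| / δ ^ (k + 1)) := by
          gcongr
          exact abs_div_pow_le_of_le _ hδ (hpos l' hl' s (hIcc s hs)).le
      _ = k * (|g s| / δ ^ (k + 1)) := by ring
  case deriv =>
    exact (hasDerivAt_div_sub_mul_pow (g s) (D s) η l' k
      (hδ.trans (hpos l' hl' s (hIcc s hs))).ne').congr_deriv (mul_div_assoc _ _ _)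
  simpa only [intervalIntegral.integral_const_mul] using key.2

theorem HasSecondDerivBoundOn.integral_div_sub_mul (hpq : p ≤ q)
    (hg : ContinuousOn g (Icc p q)) (hD : ContinuousOn D (Icc p q))
    (hDδ : ∀ s ∈ Icc p q, 2 * δ ≤ D s) (hη : |η| ≤ 1) :
    HasSecondDerivBoundOn (fun l => ∫ s in p..q, g s / (D s - η * l)) (Ioo (-δ) δ)
      (2 * (∫ s in p..q, |g s|) / δ ^ 3) := by
  refine ⟨fun l => η * ∫ s in p..q, g s / (D s - η * l) ^ 2,
    fun l => η * (2 * η * ∫ s in p..q, g s / (D s - η * l) ^ 3), fun l hl => ⟨?_, ?_, ?_⟩⟩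
  · simpa using hasDerivAt_integral_div_sub_mul_pow hpq hg hD hDδ hη 1 hl
  · simpa using (hasDerivAt_integral_div_sub_mul_pow hpq hg hD hDδ hη 2 hl).const_mul η
  have hδ : 0 < δ := by linarith [hl.1, hl.2]
  have hpos : ∀ s ∈ Icc p q, δ < D s - η * l :=
    fun s hs => lt_sub_mul_of_mem_Ioo hη (hDδ s hs) hl
  have hint : |∫ s in p..q, g s / (D s - η * l) ^ 3| ≤ (∫ s in p..q, |g s|) / δ ^ 3 :=
    calc _ ≤ ∫ s in p..q, |g s / (D s - η * l) ^ 3| :=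
          intervalIntegral.abs_integral_le_integral_abs hpq
      _ ≤ ∫ s in p..q, |g s| / δ ^ 3 := by
          refine intervalIntegral.integral_mono_on hpq ?_
            ((hg.abs.div_const _).intervalIntegrable_of_Icc hpq) fun s hs =>
              abs_div_pow_le_of_le 3 hδ (hpos s hs).le
          exact (continuousOn_div_sub_mul_pow hg hD
            (fun s hs => (hδ.trans (hpos s hs)).ne') _).abs.intervalIntegrable_of_Icc hpq
      _ = (∫ s in p..q, |g s|) / δ ^ 3 := intervalIntegral.integral_div _ _
  calc _ = |η| ^ 2 * (2 * |∫ s in p..q, g s / (D s - η * l) ^ 3|) := by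
        simp only [abs_mul, abs_two]; ring
    _ ≤ 1 * (2 * ((∫ s in p..q, |g s|) / δ ^ 3)) := by
        gcongr
        exact pow_le_one₀ (abs_nonneg η) hη
    _ = _ := by ring

end ParametricIntegral

section Guerra

variable {ξ x : ℝ → ℝ}

theorem continuous_xi2 (hξ : ContDiff ℝ 3 ξ) : Continuous (xi2 ξ) := by
  have h := hξ.continuous_iteratedDeriv 2 (by norm_num)
  rwa [iteratedDeriv_eq_iterate] at h

theorem intervalIntegrable_xi2_mul (hξ : ContDiff ℝ 3 ξ) (hx : MonotoneOn x (Icc 0 1)) :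
    IntervalIntegrable (fun s => xi2 ξ s * x s) volume 0 1 :=
  (MonotoneOn.intervalIntegrable (by rwa [uIcc_of_le zero_le_one])).continuousOn_mul
    (continuous_xi2 hξ).continuousOn

theorem continuousOn_dFun (hint : IntervalIntegrable (fun s => xi2 ξ s * x s) volume 0 1) :
    ContinuousOn (dFun ξ x) (Icc 0 1) := by
  have hint' : IntegrableOn (fun s => xi2 ξ s * x s) (uIcc 0 1) volume := by
    rw [uIcc_of_le zero_le_one]
    exact (intervalIntegrable_iff_integrableOn_Icc_of_le zero_le_one).mp hint
  have h := intervalIntegral.continuousOn_primitive_interval_left hint'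
  rwa [uIcc_of_le zero_le_one] at h

theorem dFun_le_dFun_zero (hint : IntervalIntegrable (fun s => xi2 ξ s * x s) volume 0 1)
    (hnonneg : ∀ s ∈ Ioc 0 1, 0 ≤ xi2 ξ s * x s) {s : ℝ} (hs : s ∈ Icc 0 1) :
    dFun ξ x s ≤ dFun ξ x 0 :=
  intervalIntegral.integral_mono_interval hs.1 hs.2 le_rfl
    (ae_restrict_of_forall_mem measurableSet_Ioc hnonneg) hint

theorem phiFun_le_dFun_zero {t u s : ℝ} (ht : t ∈ Ioo 0 1)
    (hd : ∀ s ∈ Icc 0 1, dFun ξ x s ≤ dFun ξ x 0) (hu : u ∈ Icc 0 1) (hs : s ∈ Icc 0 1) :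
    phiFun ξ x t u s ≤ dFun ξ x 0 := by
  have hc₀ : 0 ≤ (1 - t) / (1 + t) := div_nonneg (by linarith [ht.2]) (by linarith [ht.1])
  have hc₁ : (1 - t) / (1 + t) ≤ 1 := (div_le_one (by linarith [ht.1])).2 (by linarith [ht.1])
  have := mul_le_mul_of_nonneg_left (hd s hs) hc₀
  have := mul_le_mul_of_nonneg_left (hd u hu) (sub_nonneg.2 hc₁)
  unfold phiFun
  linarith

variable {t b u δ : ℝ}

theorem hasSecondDerivBoundOn_integral_xi2_div (hξ : Continuous (xi2 ξ)) {p q η : ℝ}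
    {D : ℝ → ℝ} (hp : 0 ≤ p) (hpq : p ≤ q) (hq : q ≤ 1) (hη : |η| ≤ 1)
    (hD : ContinuousOn D (Icc 0 1)) (hDδ : ∀ s ∈ Icc 0 1, 2 * δ ≤ b - D s) :
    HasSecondDerivBoundOn (fun l => ∫ s in p..q, xi2 ξ s / (b - η * l - D s)) (Ioo (-δ) δ)
      (2 * (∫ s in p..q, |xi2 ξ s|) / δ ^ 3) := by
  have hsub : Icc p q ⊆ Icc 0 1 := Icc_subset_Icc hp hq
  exact (HasSecondDerivBoundOn.integral_div_sub_mul (D := fun s => b - D s) hpq hξ.continuousOn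
    (continuousOn_const.sub (hD.mono hsub)) (fun s hs => hDδ s (hsub hs)) hη).congr isOpen_Ioo
    fun l _ => intervalIntegral.integral_congr fun s _ => by ring

theorem hasSecondDerivBoundOn_TFun (hξ : Continuous (xi2 ξ))
    (hd : ContinuousOn (dFun ξ x) (Icc 0 1)) (hd_le : ∀ s ∈ Icc 0 1, dFun ξ x s ≤ dFun ξ x 0)
    (ht : t ∈ Ioo 0 1) (hδ : 0 < δ) (hbδ : 2 * δ ≤ b - dFun ξ x 0) (hu : |u| ≤ 1) :
    HasSecondDerivBoundOn (TFun ξ x t b u) (Ioo (-δ) δ)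
      (1 / δ ^ 2 + 2 * (∫ s in (0 : ℝ)..1, |xi2 ξ s|) / δ ^ 3) := by
  have hd0 : 0 ≤ dFun ξ x 0 := by
    simpa [dFun] using hd_le 1 ⟨zero_le_one, le_rfl⟩
  set η : ℝ := if 0 ≤ u then 1 else -1 with hη_def
  have hη : |η| ≤ 1 := by rw [hη_def]; split_ifs <;> simp
  have hu' : |u| ∈ Icc (0 : ℝ) 1 := ⟨abs_nonneg u, hu⟩
  have hdδ : ∀ s ∈ Icc 0 1, 2 * δ ≤ b - dFun ξ x s := fun s hs => by linarith [hd_le s hs]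
  have hφδ : ∀ s ∈ Icc 0 1, 2 * δ ≤ b - phiFun ξ x t |u| s :=
    fun s hs => by linarith [phiFun_le_dFun_zero ht hd_le hu' hs]
  have hφ : ContinuousOn (phiFun ξ x t |u|) (Icc 0 1) :=
    continuousOn_const.add (continuousOn_const.mul (hd.sub continuousOn_const))
  have hsum := ((((((HasSecondDerivBoundOn.log_sq_div_sq_sub_sq hδ
      (by linarith : 2 * δ ≤ b)).const_mul (1 / 2)).add
    ((hasSecondDerivBoundOn_integral_xi2_div hξ le_rfl hu'.1 hu hη hd hdδ).const_mul
      ((1 + t) / 2))).add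
    ((hasSecondDerivBoundOn_integral_xi2_div hξ le_rfl hu'.1 hu (η := -η) (by rwa [abs_neg]) hφ
      hφδ).const_mul ((1 - t) / 2))).add
    ((hasSecondDerivBoundOn_integral_xi2_div hξ hu'.1 hu le_rfl (η := 1) (by simp) hd
      hdδ).const_mul (1 / 2))).add
    ((hasSecondDerivBoundOn_integral_xi2_div hξ hu'.1 hu le_rfl (η := -1) (by simp) hd
      hdδ).const_mul (1 / 2))).add
    (HasSecondDerivBoundOn.affine (-u) (b - 1 - log b - ∫ q in (0 : ℝ)..1, xi2 ξ q * x q))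
  refine (hsum.congr isOpen_Ioo fun l _ => ?_).mono (le_of_eq ?_)
  · simp only [TFun, ← hη_def, neg_mul, one_mul, sub_neg_eq_add]
    ring
  · have hsplit := intervalIntegral.integral_add_adjacent_intervals
      (hξ.abs.intervalIntegrable (μ := volume) 0 |u|) (hξ.abs.intervalIntegrable |u| 1)
    rw [← hsplit, abs_of_pos (by linarith [ht.1] : 0 < (1 + t) / 2),
      abs_of_pos (by linarith [ht.2] : 0 < (1 - t) / 2), abs_of_pos (by norm_num : (0 : ℝ) < 1 / 2)]
    field_simp
    ring

theorem hasSecondDerivBoundOn_guerraP (h : ℝ) (hξ : Continuous (xi2 ξ))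
    (hd : ContinuousOn (dFun ξ x) (Icc 0 1)) (hd_le : ∀ s ∈ Icc 0 1, dFun ξ x s ≤ dFun ξ x 0)
    (ht : t ∈ Ioo 0 1) (hδ : 0 < δ) (hbδ : 2 * δ ≤ b - dFun ξ x 0) (hu : |u| ≤ 1) :
    HasSecondDerivBoundOn (GuerraP ξ x t h b u) (Ioo (-δ) δ)
      (1 / δ ^ 2 + 2 * (∫ s in (0 : ℝ)..1, |xi2 ξ s|) / δ ^ 3 + 2 * h ^ 2 / δ ^ 3) := by
  set c : ℝ := if 0 ≤ u then dFun ξ x 0 else phiFun ξ x t |u| 0 with hc_def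
  have hc : 2 * δ ≤ b - c := by
    rw [hc_def]
    split_ifs
    · exact hbδ
    · linarith [phiFun_le_dFun_zero ht hd_le ⟨abs_nonneg u, hu⟩ ⟨le_rfl, zero_le_one⟩]
  refine (((hasSecondDerivBoundOn_TFun hξ hd hd_le ht hδ hbδ hu).add
    (HasSecondDerivBoundOn.div_sub_mul (h ^ 2) (η := 1) (by simp) hδ hc)).congr isOpen_Ioo
    fun l _ => ?_).mono (by rw [abs_of_nonneg (sq_nonneg h), mul_div_assoc])
  simp only [GuerraP, hc_def]
  split_ifs <;> ring

end Guerra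

theorem guerra_second_deriv_bound_general
    (ξ x : ℝ → ℝ) (h t b ux : ℝ)
    (hξ_smooth : ContDiff ℝ 3 ξ)
    (hξ'' : ∀ s ∈ Set.Ioc (0:ℝ) 1, 0 < xi2 ξ s)
    (hx_mono : MonotoneOn x (Set.Icc 0 1))
    (hx_mem : ∀ q ∈ Set.Icc (0:ℝ) 1, x q ∈ Set.Icc (0:ℝ) 1)
    (hux_mem : ux ∈ Set.Icc (0:ℝ) 1)
    (ht : t ∈ Set.Ioo (0:ℝ) 1)
    (hb : max 1 (∫ s in (0:ℝ)..1, xi2 ξ s * x s) < b) :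
    ∃ δ L : ℝ, 0 < δ ∧ δ < b - dFun ξ x 0 ∧ 0 < L ∧
      ∀ u ∈ Set.Icc (-ux) ux, ∀ lam ∈ Set.Ioo (-δ) δ,
        DifferentiableAt ℝ (fun l => GuerraP ξ x t h b u l) lam ∧
        DifferentiableAt ℝ (deriv (fun l => GuerraP ξ x t h b u l)) lam ∧
        |deriv (deriv (fun l => GuerraP ξ x t h b u l)) lam| ≤ L := by
  have hξ := continuous_xi2 hξ_smooth
  have hint := intervalIntegrable_xi2_mul hξ_smooth hx_mono
  have hd_le : ∀ s ∈ Icc (0 : ℝ) 1, dFun ξ x s ≤ dFun ξ x 0 := fun s hs =>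
    dFun_le_dFun_zero hint (fun q hq => mul_nonneg (hξ'' q hq).le
      (hx_mem q (Ioc_subset_Icc_self hq)).1) hs
  have hbd : dFun ξ x 0 < b := (le_max_right _ _).trans_lt hb
  have hA : 0 ≤ ∫ s in (0 : ℝ)..1, |xi2 ξ s| :=
    intervalIntegral.integral_nonneg zero_le_one fun _ _ => abs_nonneg _
  set δ := (b - dFun ξ x 0) / 2 with hδ_def
  have hδ : 0 < δ := by rw [hδ_def]; linarith
  have hbδ : 2 * δ ≤ b - dFun ξ x 0 := by rw [hδ_def]; linarith
  refine ⟨δ, 1 / δ ^ 2 + 2 * (∫ s in (0 : ℝ)..1, |xi2 ξ s|) / δ ^ 3 + 2 * h ^ 2 / δ ^ 3, hδ,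
    by linarith, by positivity, fun u hu l hl => ?_⟩
  exact (hasSecondDerivBoundOn_guerraP h hξ (continuousOn_dFun hint) hd_le ht hδ hbδ
    ((abs_le.2 hu).trans hux_mem.2)).differentiableAt_deriv_and_abs_deriv_deriv_le isOpen_Ioo hl

/-- Uniform bound on the second derivative of `λ ↦ 𝒫_u(x,b,λ)` near `λ = 0`,
uniformly in `u ∈ [-u_x, u_x]`. -/
theorem guerra_second_deriv_bound
    (ξ x : ℝ → ℝ) (h t b ux : ℝ)
    (hξ_even : ∀ s, ξ (-s) = ξ s)
    (hξ_smooth : ContDiff ℝ 3 ξ)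
    (hξ'' : ∀ s ∈ Set.Ioc (0:ℝ) 1, 0 < xi2 ξ s)
    (hξ''' : ∀ s ∈ Set.Icc (0:ℝ) 1, 0 ≤ deriv (xi2 ξ) s)
    (hx_mono : MonotoneOn x (Set.Icc 0 1))
    (hx_mem : ∀ q ∈ Set.Icc (0:ℝ) 1, x q ∈ Set.Icc (0:ℝ) 1)
    (hx_rc : ∀ q ∈ Set.Ico (0:ℝ) 1, ContinuousWithinAt x (Set.Ici q) q)
    (hx_one : x 1 = 1)
    (hux_mem : ux ∈ Set.Icc (0:ℝ) 1)
    (hux_lower : ∀ q ∈ Set.Ico (0:ℝ) ux, x q = 0)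
    (hux_upper : ∀ q ∈ Set.Ioc ux 1, 0 < x q)
    (ht : t ∈ Set.Ioo (0:ℝ) 1)
    (hb : max 1 (∫ s in (0:ℝ)..1, xi2 ξ s * x s) < b) :
    ∃ δ L : ℝ, 0 < δ ∧ δ < b - dFun ξ x 0 ∧ 0 < L ∧
      ∀ u ∈ Set.Icc (-ux) ux, ∀ lam ∈ Set.Ioo (-δ) δ,
        DifferentiableAt ℝ (fun l => GuerraP ξ x t h b u l) lam ∧
        DifferentiableAt ℝ (deriv (fun l => GuerraP ξ x t h b u l)) lam ∧
        |deriv (deriv (fun l => GuerraP ξ x t h b u l)) lam| ≤ L :=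
  guerra_second_deriv_bound_general ξ x h t b ux hξ_smooth hξ'' hx_mono hx_mem hux_mem ht hb
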